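/- arXiv:1909.02340 — 3 statements merged into one kernel-verified Lean document; each statement's English description precedes it below -/
import Mathlib

section
/- Let n be a positive integer. In the field ℚ(t), the rational function V(t) = 1 + (1 - t^{2n})(1 - t^{-2n})(t^{2n} - t^{-2n})²(t + 1 + t^{-1}) / ((1+t)²(1+t^{-1})²) is actually a Laurent polynomial in t, and satisfies V(1) = 1. -/
/-!
Put `y = t ^ (2 * n)`. Up to monomial factors, `1 - t⁻¹ ^ (2 * n)`, `t ^ (2 * n) - t⁻¹ ^ (2 * n)`,
`t + 1 + t⁻¹` and `1 + t⁻¹` are `1 - y`, `(1 - y) (1 + y)`, `t² + t + 1` and `1 + t`. Since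
`1 + t ∣ 1 - t² ∣ 1 - y`, writing `1 - y = (1 + t) q` the factor `(1 + t) ^ 4` of the denominator
cancels against `(1 - y) ^ 4`, so `V = 1 - t ^ (1 - 6n) q ^ 4 (1 + y) ^ 2 (t² + t + 1)`.
At `t = 1` we get `2 q(1) = 0`, hence `V(1) = 1`.
-/

open scoped Polynomial

open RatFunc

universe u

theorem one_add_dvd_one_sub_pow_two_mul {R : Type*} [CommRing R] (x : R) (n : ℕ) :
    1 + x ∣ 1 - x ^ (2 * n) := by
  rw [pow_mul]
  exact (Dvd.intro (1 - x) (by ring)).trans (one_sub_dvd_one_sub_pow (x ^ 2) n)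

theorem RatFunc.eval_algebraMap_div_algebraMap {K L : Type u} [Field K] [Field L] (f : K →+* L)
    (a : L) (p q : K[X]) (hq : q.eval₂ f a ≠ 0) :
    eval f a (algebraMap _ _ p / algebraMap _ _ q) = p.eval₂ f a / q.eval₂ f a := by
  have hq0 : q ≠ 0 := by rintro rfl; simp at hq
  have hden : (denom (algebraMap _ _ p / algebraMap _ _ q)).eval₂ f a ≠ 0 := fun h =>
    hq (Polynomial.eval₂_eq_zero_of_dvd_of_eval₂_eq_zero f a (denom_div_dvd p q) h)
  have hmul := eval_mul f a hden (y := algebraMap _ _ q) (by simp)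
  rw [div_mul_cancel₀ _ (by simpa using hq0), eval_algebraMap, eval_algebraMap] at hmul
  rw [eq_div_iff hq]
  simpa using hmul.symm

theorem laurent_form_of_one_sub_eq_one_add_mul {F : Type*} [Field F] {x y q : F}
    (hx : x ≠ 0) (hy : y ≠ 0) (hx1 : 1 + x ≠ 0) (hq : 1 - y = (1 + x) * q) :
    1 + (1 - y) * (1 - y⁻¹) * (y - y⁻¹) ^ 2 * (x + 1 + x⁻¹) / ((1 + x) ^ 2 * (1 + x⁻¹) ^ 2)
      = (x * y ^ 3 - x ^ 2 * q ^ 4 * (1 + y) ^ 2 * (x ^ 2 + x + 1)) / (x * y ^ 3) := by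
  obtain rfl : y = 1 - (1 + x) * q := by linear_combination -hq
  have hx1' : x + 1 ≠ 0 := by rwa [add_comm]
  field_simp
  ring

theorem stmt10_general (n : ℕ) (V : RatFunc ℚ)
    (hV : V = 1 + (1 - RatFunc.X ^ (2 * n)) * (1 - (RatFunc.X)⁻¹ ^ (2 * n))
        * (RatFunc.X ^ (2 * n) - (RatFunc.X)⁻¹ ^ (2 * n)) ^ 2
        * (RatFunc.X + 1 + (RatFunc.X)⁻¹)
        / ((1 + RatFunc.X) ^ 2 * (1 + (RatFunc.X)⁻¹) ^ 2)) :
    (∃ (p : Polynomial ℚ) (k : ℕ),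
        V = algebraMap (Polynomial ℚ) (RatFunc ℚ) p / RatFunc.X ^ k) ∧
    RatFunc.eval (RingHom.id ℚ) 1 V = 1 := by
  obtain ⟨q, hq⟩ := one_add_dvd_one_sub_pow_two_mul (Polynomial.X : ℚ[X]) n
  set p : ℚ[X] := Polynomial.X ^ (6 * n + 1) - Polynomial.X ^ 2 * q ^ 4
    * (1 + Polynomial.X ^ (2 * n)) ^ 2 * (Polynomial.X ^ 2 + Polynomial.X + 1)
  have h1X : (1 + X : RatFunc ℚ) ≠ 0 := by
    rw [← algebraMap_X, ← map_one (algebraMap ℚ[X] _), ← map_add]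
    exact algebraMap_ne_zero fun h => by simpa using congrArg (Polynomial.eval 0) h
  have hV' : V = algebraMap ℚ[X] (RatFunc ℚ) p / X ^ (6 * n + 1) := by
    rw [hV, inv_pow, laurent_form_of_one_sub_eq_one_add_mul X_ne_zero (pow_ne_zero _ X_ne_zero)
      h1X (q := algebraMap ℚ[X] _ q) (by simpa using congrArg (algebraMap ℚ[X] (RatFunc ℚ)) hq)]
    simp only [p, map_sub, map_mul, map_pow, map_add, map_one, algebraMap_X]
    ring
  refine ⟨⟨p, 6 * n + 1, hV'⟩, ?_⟩
  have hq1 : q.eval 1 = 0 := by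
    have h := congrArg (Polynomial.eval 1) hq
    simp only [Polynomial.eval_sub, Polynomial.eval_mul, Polynomial.eval_add, Polynomial.eval_one,
      Polynomial.eval_pow, Polynomial.eval_X, one_pow, sub_self] at h
    linarith
  rw [hV', ← algebraMap_X, ← map_pow, eval_algebraMap_div_algebraMap _ _ _ _ (by simp)]
  simp [p, hq1]

/-- The rational function V(t) = 1 + (1-t^{2n})(1-t^{-2n})(t^{2n}-t^{-2n})²(t+1+t⁻¹)
/((1+t)²(1+t⁻¹)²) is a Laurent polynomial in t and satisfies V(1) = 1. -/
theorem stmt10 (n : ℕ) (hn : 0 < n) (V : RatFunc ℚ)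
    (hV : V = 1 + (1 - RatFunc.X ^ (2 * n)) * (1 - (RatFunc.X)⁻¹ ^ (2 * n))
        * (RatFunc.X ^ (2 * n) - (RatFunc.X)⁻¹ ^ (2 * n)) ^ 2
        * (RatFunc.X + 1 + (RatFunc.X)⁻¹)
        / ((1 + RatFunc.X) ^ 2 * (1 + (RatFunc.X)⁻¹) ^ 2)) :
    (∃ (p : Polynomial ℚ) (k : ℕ),
        V = algebraMap (Polynomial ℚ) (RatFunc ℚ) p / RatFunc.X ^ k) ∧
    RatFunc.eval (RingHom.id ℚ) 1 V = 1 :=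
  stmt10_general n V hV
end

section
/- Let n be a positive integer and let V(t) = 1 + (1 - t^{2n})(1 - t^{-2n})(t^{2n} - t^{-2n})²(t + 1 + t^{-1}) / ((1+t)²(1+t^{-1})²). Then the coefficient of h⁴ in the Taylor expansion of V(e^h) at h = 0 equals -12n⁴. -/
/-!
Each of the three factors `1 - t^{2n}`, `1 - t^{-2n}`, `t^{2n} - t^{-2n}` vanishes at `h = 0`, so
the correction term of `V(e^h)` is divisible by `h⁴`. Its `h⁴`-coefficient is therefore the product
of the leading coefficients `-2n`, `2n`, `(4n)²` with the value `3/16` of the remaining factor at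
`h = 0`.
-/

open PowerSeries

namespace PowerSeries

section CommRing

variable {R : Type*} [CommRing R]

theorem coeff_add_mul_of_X_pow_dvd {f g : R⟦X⟧} {m k : ℕ} (hf : X ^ m ∣ f) (hg : X ^ k ∣ g) :
    coeff (m + k) (f * g) = coeff m f * coeff k g := by
  obtain ⟨f', rfl⟩ := hf
  obtain ⟨g', rfl⟩ := hg
  have hmul : X ^ m * f' * (X ^ k * g') = X ^ (m + k) * (f' * g') := by ring
  simp only [hmul, coeff_X_pow_mul', le_refl, if_true, Nat.sub_self,
    coeff_zero_eq_constantCoeff_apply, map_mul]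

theorem coeff_four_mul_mul_sq_mul_of_X_dvd {f g h : R⟦X⟧} (b : R⟦X⟧) (hf : X ∣ f) (hg : X ∣ g)
    (hh : X ∣ h) :
    coeff 4 (f * g * h ^ 2 * b) = coeff 1 f * coeff 1 g * coeff 1 h ^ 2 * constantCoeff b := by
  rw [← pow_one X] at hf hg hh
  have hfg : X ^ (1 + 1) ∣ f * g := by rw [pow_add]; exact mul_dvd_mul hf hg
  have hh2 : X ^ (1 + 1) ∣ h * h := by rw [pow_add]; exact mul_dvd_mul hh hh
  have hfgh : X ^ (1 + 1 + (1 + 1)) ∣ f * g * (h * h) := by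
    rw [pow_add]; exact mul_dvd_mul hfg hh2
  rw [sq, sq, ← coeff_zero_eq_constantCoeff_apply, ← coeff_add_mul_of_X_pow_dvd hf hg,
    ← coeff_add_mul_of_X_pow_dvd hh hh, ← coeff_add_mul_of_X_pow_dvd hfg hh2,
    ← coeff_add_mul_of_X_pow_dvd hfgh (by simp : X ^ 0 ∣ b)]

end CommRing

section ExpRescale

variable {A : Type*} [CommRing A] [Algebra ℚ A]

theorem rescale_exp_pow (a : A) (k : ℕ) :
    rescale a (exp A) ^ k = rescale (k * a) (exp A) := by
  rw [← map_pow, exp_pow_eq_rescale_exp, rescale_rescale]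

@[simp]
theorem constantCoeff_rescale_exp (a : A) : constantCoeff (rescale a (exp A)) = 1 := by
  rw [← coeff_zero_eq_constantCoeff_apply, coeff_rescale]
  simp

@[simp]
theorem coeff_one_rescale_exp (a : A) : coeff 1 (rescale a (exp A)) = a := by
  simp [coeff_rescale]

end ExpRescale

end PowerSeries

theorem stmt11_general (n : ℕ)
    (E F W : PowerSeries ℚ)
    (hE : E = PowerSeries.exp ℚ)
    (hF : F = PowerSeries.rescale (-1) (PowerSeries.exp ℚ))
    (hW : W = 1 + (1 - E ^ (2 * n)) * (1 - F ^ (2 * n))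
        * (E ^ (2 * n) - F ^ (2 * n)) ^ 2 * (E + 1 + F)
        * (((1 + E) ^ 2 * (1 + F) ^ 2)⁻¹)) :
    PowerSeries.coeff 4 W = -12 * (n : ℚ) ^ 4 := by
  have hEn : E ^ (2 * n) = rescale (2 * n : ℚ) (exp ℚ) := by
    rw [hE, exp_pow_eq_rescale_exp, Nat.cast_mul, Nat.cast_ofNat]
  have hFn : F ^ (2 * n) = rescale (-(2 * n) : ℚ) (exp ℚ) := by
    rw [hF, rescale_exp_pow]
    push_cast
    ring_nf
  set P := 1 - rescale (2 * n : ℚ) (exp ℚ)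
  set Q := 1 - rescale (-(2 * n) : ℚ) (exp ℚ)
  set R := rescale (2 * n : ℚ) (exp ℚ) - rescale (-(2 * n) : ℚ) (exp ℚ)
  set B := (E + 1 + F) * ((1 + E) ^ 2 * (1 + F) ^ 2)⁻¹
  have hW' : W = 1 + P * Q * R ^ 2 * B := by
    rw [hW, hEn, hFn]
    ring
  have hB : constantCoeff B = 3 / 16 := by
    simp [B, constantCoeff_inv, hE, hF]
    norm_num
  rw [hW', map_add, coeff_four_mul_mul_sq_mul_of_X_dvd B (by simp [X_dvd_iff, P])
    (by simp [X_dvd_iff, Q]) (by simp [X_dvd_iff, R]), hB]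
  simp [P, Q, R]
  ring

/-- The coefficient of h⁴ in V(e^h), where V is the Jones polynomial of
C[4n,-2n,-2n,4n], equals -12 n⁴. -/
theorem stmt11 (n : ℕ) (hn : 0 < n)
    (E F W : PowerSeries ℚ)
    (hE : E = PowerSeries.exp ℚ)
    (hF : F = PowerSeries.rescale (-1) (PowerSeries.exp ℚ))
    (hW : W = 1 + (1 - E ^ (2 * n)) * (1 - F ^ (2 * n))
        * (E ^ (2 * n) - F ^ (2 * n)) ^ 2 * (E + 1 + F)
        * (((1 + E) ^ 2 * (1 + F) ^ 2)⁻¹)) :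
    PowerSeries.coeff 4 W = -12 * (n : ℚ) ^ 4 :=
  stmt11_general n E F W hE hF hW
end

section
/- The continued fraction identities [2x, 2y, -2(x+y), 2x] = [2x, 2y-1, 1, 2x+2y-2, 1, 2x-1] hold: both continued fractions (with convention [a₁,…,a_k] = a₁ + 1/(a₂ + 1/(⋯ + 1/a_k))) evaluate to the same rational number for all integers x ≥ 1, y ≥ 1. -/
/-- Evaluation of a continued fraction [a₁,…,a_k] = a₁ + 1/(a₂ + 1/(⋯ + 1/a_k))
in ℚ (with the junk convention 0⁻¹ = 0 handling the empty tail). -/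
def cfrac : List ℤ → ℚ
  | [] => 0
  | a :: l => (a : ℚ) + (cfrac l)⁻¹

/-!
The right-hand side comes from the left-hand side by applying twice the rule
`[…, a, -b, c, d, …] = […, a - 1, 1, b - 1, -c, -d, …]`, i.e. the identity
`a - 1/w = (a - 1) + 1/(1 + 1/(w - 1))` for `w = [b, -c, -d, …] ∉ {0, 1}`:
first at `-2(x + y)`, then at the `-2x` this produces.
-/

@[simp]
theorem cfrac_singleton (a : ℤ) : cfrac [a] = a := by
  simp [cfrac]

theorem cfrac_cons_congr (a : ℤ) {l l' : List ℤ} (h : cfrac l = cfrac l') :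
    cfrac (a :: l) = cfrac (a :: l') := by
  rw [cfrac, cfrac, h]

@[simp]
theorem cfrac_map_neg (l : List ℤ) : cfrac (l.map Neg.neg) = -cfrac l := by
  induction l with
  | nil => simp [cfrac]
  | cons a l ih =>
    simp only [List.map_cons, cfrac, ih, Int.cast_neg, inv_neg]
    ring

theorem sub_inv_eq_sub_one_add_inv {K : Type*} [Field K] {a w : K} (h₀ : w ≠ 0) (h₁ : w - 1 ≠ 0) :
    a - w⁻¹ = (a - 1) + (1 + (w - 1)⁻¹)⁻¹ := by
  have h₂ : 1 + (w - 1)⁻¹ = w / (w - 1) := by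
    field_simp
    ring
  rw [h₂, inv_div]
  field_simp
  ring

theorem cfrac_cons_cons_neg (a b : ℤ) (l : List ℤ) (h₀ : cfrac (-b :: l) ≠ 0)
    (h₁ : cfrac ((b - 1) :: l.map Neg.neg) ≠ 0) :
    cfrac (a :: -b :: l) = cfrac ((a - 1) :: 1 :: (b - 1) :: l.map Neg.neg) := by
  set w : ℚ := b - (cfrac l)⁻¹
  have hw₀ : cfrac (-b :: l) = -w := by
    simp only [cfrac, w, Int.cast_neg]
    ring
  have hw₁ : cfrac ((b - 1) :: l.map Neg.neg) = w - 1 := by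
    simp only [cfrac, cfrac_map_neg, w, Int.cast_sub, Int.cast_one, inv_neg]
    ring
  rw [hw₀, neg_ne_zero] at h₀
  rw [hw₁] at h₁
  rw [cfrac, hw₀, cfrac, cfrac, hw₁, inv_neg, ← sub_eq_add_neg,
    sub_inv_eq_sub_one_add_inv h₀ h₁]
  push_cast
  ring

theorem cfrac_pair_ne_zero {c d : ℤ} (hc : 2 ≤ |c|) (hd : d ≠ 0) : cfrac [c, d] ≠ 0 := by
  have hd' : (1 : ℚ) ≤ |(d : ℚ)| := by exact_mod_cast Int.one_le_abs hd
  have hinv : |(d : ℚ)⁻¹| ≤ 1 := by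
    rw [abs_inv]
    exact inv_le_one_of_one_le₀ hd'
  have hc' : (2 : ℚ) ≤ |(c : ℚ)| := by exact_mod_cast hc
  intro h
  rw [cfrac, cfrac_singleton, add_eq_zero_iff_eq_neg] at h
  rw [h, abs_neg] at hc'
  linarith

theorem stmt16 (x y : ℤ) (hx : 1 ≤ x) (hy : 1 ≤ y) :
    cfrac [2 * x, 2 * y, -2 * (x + y), 2 * x]
      = cfrac [2 * x, 2 * y - 1, 1, 2 * x + 2 * y - 2, 1, 2 * x - 1] := by
  have inner : cfrac [2 * (x + y) - 1, -(2 * x)]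
      = cfrac [2 * x + 2 * y - 2, 1, 2 * x - 1] := by
    rw [cfrac_cons_cons_neg _ _ []
      (by rw [cfrac_singleton, Int.cast_ne_zero]; omega)
      (by rw [List.map_nil, cfrac_singleton, Int.cast_ne_zero]; omega)]
    congr 2
    ring
  have outer : cfrac [2 * y, -(2 * (x + y)), 2 * x]
      = cfrac [2 * y - 1, 1, 2 * (x + y) - 1, -(2 * x)] :=
    cfrac_cons_cons_neg _ _ [2 * x]
      (cfrac_pair_ne_zero (by rw [abs_neg, abs_of_pos] <;> omega) (by omega))
      (cfrac_pair_ne_zero (by rw [abs_of_pos] <;> omega) (by omega))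
  rw [neg_mul, cfrac_cons_congr _ outer]
  exact cfrac_cons_congr _ (cfrac_cons_congr _ (cfrac_cons_congr _ inner))
end
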